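/- arXiv:2405.14063 — 2 statements merged into one kernel-verified Lean document; each statement's English description precedes it below -/
import Mathlib

section
/- Let $S \subset (0,\infty)$ be a set of reals such that $|s + t - u| \ge c$ for all $s, t, u \in S$ and some $c > 0$. If $a_1, a_2, a_3 \in \mathbb{R}^2$ satisfy $|a_i - a_j| \in S$ and $|a_i - a_j| \ge L$ for all $i \ne j$, then $a_1, a_2, a_3$ cannot all lie in a strip of width $\sqrt{cL}/10$. -/
/-!
Measure positions along the strip by the tangential coordinate `tangentCoord v`. For two of the
points at distance `d ≥ L`, the normal components differ by at most the width `√(cL)/10`, so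
`d² - q² ≤ cL/100 ≤ cd/100` for their tangential gap `q`, whence `d - |q| ≤ c/100`. Among the
three tangential coordinates one lies between the other two, so the tangential gaps satisfy an
exact additive relation, and the distances satisfy the same relation up to `c/50 < c`. This
contradicts `c ≤ |s + t - u|` for `s, t, u ∈ S`.
-/

open Real

/- For a unit normal `v` of the strip, `normalCoord v` measures the offset across the strip and
`tangentCoord v` the position along it. -/
def normalCoord (v a : EuclideanSpace ℝ (Fin 2)) : ℝ := a 0 * v 0 + a 1 * v 1

def tangentCoord (v a : EuclideanSpace ℝ (Fin 2)) : ℝ := a 1 * v 0 - a 0 * v 1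

lemma dist_sq_eq_normalCoord_sq_add_tangentCoord_sq {v : EuclideanSpace ℝ (Fin 2)}
    (hv : v 0 ^ 2 + v 1 ^ 2 = 1) (a b : EuclideanSpace ℝ (Fin 2)) :
    dist a b ^ 2 = (normalCoord v a - normalCoord v b) ^ 2
      + (tangentCoord v a - tangentCoord v b) ^ 2 := by
  rw [EuclideanSpace.dist_eq, sq_sqrt (by positivity)]
  simp only [Fin.sum_univ_two, Real.dist_eq, sq_abs, normalCoord, tangentCoord]
  linear_combination (-((a 0 - b 0) ^ 2 + (a 1 - b 1) ^ 2)) * hv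

lemma abs_le_and_le_abs_add_of_sq_add_sq_eq {p q d ε : ℝ} (hd : 0 ≤ d) (hε : 0 ≤ ε)
    (h : p ^ 2 + q ^ 2 = d ^ 2) (hp : p ^ 2 ≤ ε * d) : |q| ≤ d ∧ d ≤ |q| + ε := by
  have hq : |q| ≤ d := abs_le_of_sq_le_sq (by nlinarith) hd
  refine ⟨hq, ?_⟩
  rcases hd.eq_or_lt with rfl | hd
  · linarith [abs_nonneg q]
  · have : (d - |q|) * d ≤ ε * d := by nlinarith [sq_abs q, abs_nonneg q]
    linarith [le_of_mul_le_mul_right this hd]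

lemma abs_tangentCoord_sub_le_dist_le_add {v a b : EuclideanSpace ℝ (Fin 2)} {t c L : ℝ}
    (hv : v 0 ^ 2 + v 1 ^ 2 = 1) (hc : 0 ≤ c) (hL : L ≤ dist a b)
    (ha : |normalCoord v a - t| ≤ √(c * L) / 10 / 2)
    (hb : |normalCoord v b - t| ≤ √(c * L) / 10 / 2) :
    |tangentCoord v a - tangentCoord v b| ≤ dist a b
      ∧ dist a b ≤ |tangentCoord v a - tangentCoord v b| + c / 100 := by
  have hp : |normalCoord v a - normalCoord v b| ≤ √(c * L) / 10 := by
    have := abs_sub_le (normalCoord v a) t (normalCoord v b)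
    rw [abs_sub_comm t] at this
    linarith
  have hcd : √(c * L) ≤ √(c * dist a b) := sqrt_le_sqrt (mul_le_mul_of_nonneg_left hL hc)
  have hp2 : (normalCoord v a - normalCoord v b) ^ 2 ≤ c / 100 * dist a b := by
    calc (normalCoord v a - normalCoord v b) ^ 2 = |normalCoord v a - normalCoord v b| ^ 2 :=
          (sq_abs _).symm
      _ ≤ (√(c * dist a b) / 10) ^ 2 := by gcongr; linarith
      _ = c / 100 * dist a b := by
          rw [div_pow, sq_sqrt (mul_nonneg hc dist_nonneg)]; ring
  exact abs_le_and_le_abs_add_of_sq_add_sq_eq dist_nonneg (by positivity)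
    (dist_sq_eq_normalCoord_sq_add_tangentCoord_sq hv a b).symm hp2

lemma abs_sub_eq_add_of_three (x y z : ℝ) :
    |x - z| = |x - y| + |y - z| ∨ |x - y| = |x - z| + |y - z| ∨
      |y - z| = |x - y| + |x - z| := by
  rcases abs_cases (x - y) with ⟨hxy, sxy⟩ | ⟨hxy, sxy⟩ <;>
    rcases abs_cases (x - z) with ⟨hxz, sxz⟩ | ⟨hxz, sxz⟩ <;>
    rcases abs_cases (y - z) with ⟨hyz, syz⟩ | ⟨hyz, syz⟩ <;>
    rw [hxy, hxz, hyz] <;>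
    first
    | exact Or.inl (by linarith)
    | exact Or.inr (Or.inl (by linarith))
    | exact Or.inr (Or.inr (by linarith))

lemma abs_add_sub_le_of_three {q₁ q₂ q₃ d₁₂ d₁₃ d₂₃ ε : ℝ}
    (h₁₂ : |q₁ - q₂| ≤ d₁₂ ∧ d₁₂ ≤ |q₁ - q₂| + ε) (h₁₃ : |q₁ - q₃| ≤ d₁₃ ∧ d₁₃ ≤ |q₁ - q₃| + ε)
    (h₂₃ : |q₂ - q₃| ≤ d₂₃ ∧ d₂₃ ≤ |q₂ - q₃| + ε) :
    |d₁₂ + d₂₃ - d₁₃| ≤ 2 * ε ∨ |d₁₃ + d₂₃ - d₁₂| ≤ 2 * ε ∨ |d₁₂ + d₁₃ - d₂₃| ≤ 2 * ε := by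
  rcases abs_sub_eq_add_of_three q₁ q₂ q₃ with h | h | h
  · left; rw [abs_le]; constructor <;> linarith
  · right; left; rw [abs_le]; constructor <;> linarith
  · right; right; rw [abs_le]; constructor <;> linarith

theorem stmt3_general (S : Set ℝ) (c : ℝ) (hc : 0 < c)
    (hsf : ∀ s ∈ S, ∀ t ∈ S, ∀ u ∈ S, c ≤ |s + t - u|)
    (L : ℝ) (a1 a2 a3 : EuclideanSpace ℝ (Fin 2))
    (h12 : dist a1 a2 ∈ S) (h13 : dist a1 a3 ∈ S) (h23 : dist a2 a3 ∈ S)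
    (hL12 : L ≤ dist a1 a2) (hL13 : L ≤ dist a1 a3) (hL23 : L ≤ dist a2 a3) :
    ¬ ∃ (v : EuclideanSpace ℝ (Fin 2)) (t : ℝ), v 0 ^ 2 + v 1 ^ 2 = 1 ∧
      ∀ a ∈ ({a1, a2, a3} : Set (EuclideanSpace ℝ (Fin 2))),
        |a 0 * v 0 + a 1 * v 1 - t| ≤ Real.sqrt (c * L) / 10 / 2 := by
  rintro ⟨v, t, hv, hstrip⟩
  have hgap : ∀ a ∈ ({a1, a2, a3} : Set _), ∀ b ∈ ({a1, a2, a3} : Set _), L ≤ dist a b →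
      |tangentCoord v a - tangentCoord v b| ≤ dist a b
        ∧ dist a b ≤ |tangentCoord v a - tangentCoord v b| + c / 100 :=
    fun a ha b hb hL ↦ abs_tangentCoord_sub_le_dist_le_add hv hc.le hL (hstrip a ha) (hstrip b hb)
  rcases abs_add_sub_le_of_three (hgap a1 (by simp) a2 (by simp) hL12)
      (hgap a1 (by simp) a3 (by simp) hL13) (hgap a2 (by simp) a3 (by simp) hL23) with h | h | h
  · exact (hsf _ h12 _ h23 _ h13).not_gt (by linarith)
  · exact (hsf _ h13 _ h23 _ h12).not_gt (by linarith)
  · exact (hsf _ h12 _ h13 _ h23).not_gt (by linarith)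

theorem stmt3 (S : Set ℝ) (hS : S ⊆ Set.Ioi 0) (c : ℝ) (hc : 0 < c)
    (hsf : ∀ s ∈ S, ∀ t ∈ S, ∀ u ∈ S, c ≤ |s + t - u|)
    (L : ℝ) (a1 a2 a3 : EuclideanSpace ℝ (Fin 2))
    (h12 : dist a1 a2 ∈ S) (h13 : dist a1 a3 ∈ S) (h23 : dist a2 a3 ∈ S)
    (hL12 : L ≤ dist a1 a2) (hL13 : L ≤ dist a1 a3) (hL23 : L ≤ dist a2 a3) :
    ¬ ∃ (v : EuclideanSpace ℝ (Fin 2)) (t : ℝ), v 0 ^ 2 + v 1 ^ 2 = 1 ∧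
      ∀ a ∈ ({a1, a2, a3} : Set (EuclideanSpace ℝ (Fin 2))),
        |a 0 * v 0 + a 1 * v 1 - t| ≤ Real.sqrt (c * L) / 10 / 2 :=
  stmt3_general S c hc hsf L a1 a2 a3 h12 h13 h23 hL12 hL13 hL23
end

section
/- Let $a_1, a_2, a_3 \in \mathbb{R}^2$ lie in a strip of width $w$ (i.e., within distance $w$ of a common line), and suppose all pairwise distances are at least $L \ge w$. Then, after relabeling so that $|a_1 - a_3|$ is the largest pairwise distance, $|a_1 - a_2| + |a_2 - a_3| - |a_1 - a_3| \le C w^2 / L$ for an absolute constant $C$. -/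
lemma abs_split (A Cc : ℝ) (h1 : |A| ≤ |A+Cc|) (h2 : |Cc| ≤ |A+Cc|) :
    |A| + |Cc| ≤ |A+Cc| := by
  have e1 : A^2 ≤ (A+Cc)^2 := by
    nlinarith [mul_self_le_mul_self (abs_nonneg A) h1, sq_abs A, sq_abs (A+Cc)]
  have e2 : Cc^2 ≤ (A+Cc)^2 := by
    nlinarith [mul_self_le_mul_self (abs_nonneg Cc) h2, sq_abs Cc, sq_abs (A+Cc)]
  rcases le_or_gt 0 (A*Cc) with hs | hs
  · have hprod : |A| * |Cc| = A * Cc := by rw [← abs_mul, abs_of_nonneg hs]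
    nlinarith [sq_abs A, sq_abs Cc, sq_abs (A+Cc), abs_nonneg A, abs_nonneg Cc,
      abs_nonneg (A+Cc), hprod]
  · exfalso
    have e3 : 0 ≤ Cc^2 + 2*(A*Cc) := by nlinarith [e1]
    have e4 : 0 ≤ A^2 + 2*(A*Cc) := by nlinarith [e2]
    nlinarith [mul_nonneg e3 e4,
      mul_nonneg (by linarith : (0:ℝ) ≤ A^2 + Cc^2 + 4*(A*Cc)) (le_of_lt (neg_pos.mpr hs)),
      mul_pos (neg_pos.mpr hs) (neg_pos.mpr hs)]

lemma aux_strip (A B Cc D w L d12 d23 d13 : ℝ)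
    (hw : 0 ≤ w) (hwL : w ≤ L)
    (h12 : d12^2 = A^2 + B^2) (h23 : d23^2 = Cc^2 + D^2)
    (h13 : d13^2 = (A+Cc)^2 + (B+D)^2)
    (hd12 : 0 ≤ d12) (hd23 : 0 ≤ d23) (hd13 : 0 ≤ d13)
    (hL12 : L ≤ d12) (hL23 : L ≤ d23)
    (hm12 : d12 ≤ d13) (hm23 : d23 ≤ d13)
    (hB : |B| ≤ 2*w) (hD : |D| ≤ 2*w) :
    d12 + d23 - d13 ≤ 64 * w^2 / L := by
  have hL0 : 0 ≤ L := hw.trans hwL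
  have hsq12 : d12^2 ≤ d13^2 := by nlinarith [mul_self_le_mul_self hd12 hm12]
  have hsq23 : d23^2 ≤ d13^2 := by nlinarith [mul_self_le_mul_self hd23 hm23]
  rcases eq_or_lt_of_le hL0 with hL | hL
  · -- L = 0, hence w = 0
    have hw0 : w = 0 := le_antisymm (hwL.trans hL.ge) hw
    subst hw0
    have hB0 : B = 0 := abs_nonpos_iff.mp (by linarith)
    have hD0 : D = 0 := abs_nonpos_iff.mp (by linarith)
    subst hB0; subst hD0
    rw [← hL]
    simp only [ne_eq, OfNat.ofNat_ne_zero, not_false_eq_true, zero_pow, mul_zero, zero_div]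
    -- goal : d12 + d23 - d13 ≤ 0
    have r12 : d12 = |A| := by
      rw [← Real.sqrt_sq hd12, show d12^2 = A^2 by linarith, Real.sqrt_sq_eq_abs]
    have r23 : d23 = |Cc| := by
      rw [← Real.sqrt_sq hd23, show d23^2 = Cc^2 by linarith, Real.sqrt_sq_eq_abs]
    have r13 : d13 = |A + Cc| := by
      rw [← Real.sqrt_sq hd13, show d13^2 = (A+Cc)^2 by linarith, Real.sqrt_sq_eq_abs]
    subst r12; subst r23; subst r13
    linarith [abs_split A Cc hm12 hm23]
  · -- L > 0
    rw [le_div_iff₀ hL]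
    set ip := A*Cc + B*D with hip
    set cr := A*D - B*Cc with hcr
    have hd1223 : 0 ≤ d12 * d23 := mul_nonneg hd12 hd23
    have F1 : d12^2 * d23^2 = ip^2 + cr^2 := by rw [h12, h23, hip, hcr]; ring
    have hip2 : ip^2 ≤ (d12*d23)^2 := by nlinarith [sq_nonneg cr]
    have F3 : ip ≤ d12 * d23 := by
      refine le_trans (le_abs_self ip) ?_
      rw [← Real.sqrt_sq hd1223, ← Real.sqrt_sq_eq_abs]
      exact Real.sqrt_le_sqrt hip2
    have F2 : d13^2 = d12^2 + d23^2 + 2*ip := by rw [h13, h12, h23, hip]; ring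
    -- triangle inequality
    have htri : d13 ≤ d12 + d23 := by
      have h1 : d13^2 ≤ (d12+d23)^2 := by nlinarith [F2, F3]
      calc d13 = Real.sqrt (d13^2) := (Real.sqrt_sq hd13).symm
        _ ≤ Real.sqrt ((d12+d23)^2) := Real.sqrt_le_sqrt h1
        _ = d12 + d23 := Real.sqrt_sq (by linarith)
    have he : 0 ≤ d12 + d23 - d13 := by linarith
    set e := d12 + d23 - d13 with hedef
    -- key identity
    have hId : e * (d12 + d23 + d13) * (d12*d23 + ip) = 2 * cr^2 := by
      linear_combination ((d12+d23+d13)*(d12*d23+ip)) * hedef + (-(d12*d23+ip)) * F2 + 2*F1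
    -- K lower bound
    have hK : d12 * d23 / 2 ≤ d12 * d23 + ip := by
      rcases le_total d12 d23 with hc | hc
      · have t1 : d12^2 ≤ d12*d23 := by rw [pow_two]; exact mul_le_mul_of_nonneg_left hc hd12
        linarith [F2, hsq23, t1]
      · have t1 : d23^2 ≤ d12*d23 := by
          rw [pow_two, mul_comm d12 d23]; exact mul_le_mul_of_nonneg_left hc hd23
        linarith [F2, hsq12, t1]
    clear F1 hip2 F2 h13
    -- |A| ≤ d12, |Cc| ≤ d23
    have hA : |A| ≤ d12 := by
      rw [← Real.sqrt_sq hd12, ← Real.sqrt_sq_eq_abs]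
      exact Real.sqrt_le_sqrt (by linarith [h12, sq_nonneg B])
    have hCc : |Cc| ≤ d23 := by
      rw [← Real.sqrt_sq hd23, ← Real.sqrt_sq_eq_abs]
      exact Real.sqrt_le_sqrt (by linarith [h23, sq_nonneg D])
    -- cross bound
    have hcrabs : |cr| ≤ 2*w*(d12 + d23) := by
      have h1 : |cr| ≤ |A*D| + |B*Cc| := by
        rw [hcr, sub_eq_add_neg]
        exact (abs_add_le _ _).trans (by rw [abs_neg])
      have h2 : |A*D| ≤ d12 * (2*w) := by
        rw [abs_mul]; exact mul_le_mul hA hD (abs_nonneg D) hd12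
      have h3 : |B*Cc| ≤ (2*w) * d23 := by
        rw [abs_mul]; exact mul_le_mul hB hCc (abs_nonneg Cc) (by positivity)
      calc |cr| ≤ |A*D| + |B*Cc| := h1
        _ ≤ d12*(2*w) + (2*w)*d23 := by linarith
        _ = 2*w*(d12+d23) := by ring
    have hcr2 : cr^2 ≤ 4*w^2*(d12+d23)^2 := by
      have h4 : |cr|^2 ≤ (2*w*(d12+d23))^2 := pow_le_pow_left₀ (abs_nonneg cr) hcrabs 2
      calc cr^2 = |cr|^2 := (sq_abs cr).symm
        _ ≤ (2*w*(d12+d23))^2 := h4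
        _ = 4*w^2*(d12+d23)^2 := by ring
    -- chain
    have hsum : d12 + d23 ≤ d12 + d23 + d13 := by linarith
    have hKnn : 0 ≤ d12*d23 + ip := le_trans (by positivity) hK
    have step1 : e * (d12+d23) * (d12*d23) ≤ e * (d12+d23+d13) * (2*(d12*d23+ip)) := by
      have n1 : 0 ≤ e * (d12+d23) := mul_nonneg he (by linarith)
      calc e * (d12+d23) * (d12*d23) ≤ e * (d12+d23) * (2*(d12*d23+ip)) := by
            apply mul_le_mul_of_nonneg_left _ n1
            linarith
        _ ≤ e * (d12+d23+d13) * (2*(d12*d23+ip)) := by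
            apply mul_le_mul_of_nonneg_right _ (by linarith)
            exact mul_le_mul_of_nonneg_left hsum he
    have step2 : e * (d12+d23) * (d12*d23) ≤ 16*w^2*(d12+d23)^2 := by
      calc e * (d12+d23) * (d12*d23) ≤ e * (d12+d23+d13) * (2*(d12*d23+ip)) := step1
        _ = 2 * (e * (d12+d23+d13) * (d12*d23+ip)) := by ring
        _ = 4 * cr^2 := by rw [hId]; ring
        _ ≤ 16*w^2*(d12+d23)^2 := by linarith
    have hL2 : L*(d12+d23) ≤ 2*(d12*d23) := by
      have u1 : L*d12 ≤ d23*d12 := mul_le_mul_of_nonneg_right hL23 (hL0.trans hL12)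
      have u2 : L*d23 ≤ d12*d23 := mul_le_mul_of_nonneg_right hL12 (hL0.trans hL23)
      calc L*(d12+d23) = L*d12 + L*d23 := by ring
        _ ≤ d23*d12 + d12*d23 := by linarith
        _ = 2*(d12*d23) := by ring
    have step3 : e*L*(d12+d23)^2 ≤ 32*w^2*(d12+d23)^2 := by
      have n1 : 0 ≤ e*(d12+d23) := mul_nonneg he (by linarith)
      have m1 := mul_le_mul_of_nonneg_left hL2 n1
      calc e*L*(d12+d23)^2 = e*(d12+d23)*(L*(d12+d23)) := by ring
        _ ≤ e*(d12+d23)*(2*(d12*d23)) := m1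
        _ = 2*(e*(d12+d23)*(d12*d23)) := by ring
        _ ≤ 2*(16*w^2*(d12+d23)^2) := by linarith [step2]
        _ = 32*w^2*(d12+d23)^2 := by ring
    have hd12pos : 0 < d12 := hL.trans_le hL12
    have hpos : (0:ℝ) < (d12+d23)^2 := by positivity
    have hfin : e * L ≤ 32 * w^2 :=
      (mul_le_mul_iff_of_pos_right hpos).mp (by linarith : (e*L) * (d12+d23)^2 ≤ (32*w^2) * (d12+d23)^2)
    linarith [hfin, sq_nonneg w]

theorem stmt4 : ∃ C : ℝ, 0 < C ∧ ∀ (w L : ℝ) (a1 a2 a3 : EuclideanSpace ℝ (Fin 2)),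
    0 ≤ w → w ≤ L →
    (∃ (v : EuclideanSpace ℝ (Fin 2)) (t : ℝ), v 0 ^ 2 + v 1 ^ 2 = 1 ∧
      ∀ a ∈ ({a1, a2, a3} : Set (EuclideanSpace ℝ (Fin 2))),
        |a 0 * v 0 + a 1 * v 1 - t| ≤ w) →
    L ≤ dist a1 a2 → L ≤ dist a1 a3 → L ≤ dist a2 a3 →
    dist a1 a2 ≤ dist a1 a3 → dist a2 a3 ≤ dist a1 a3 →
    dist a1 a2 + dist a2 a3 - dist a1 a3 ≤ C * w ^ 2 / L := by
  refine ⟨64, by norm_num, ?_⟩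
  rintro w L a1 a2 a3 hw hwL ⟨V, t, hV, hstrip⟩ hL12 hL13 hL23 hm12 hm23
  have h1 := hstrip a1 (by simp)
  have h2 := hstrip a2 (by simp)
  have h3 := hstrip a3 (by simp)
  have key : ∀ x y : EuclideanSpace ℝ (Fin 2),
      (dist x y)^2 = (x 0 - y 0)^2 + (x 1 - y 1)^2 := by
    intro x y
    rw [EuclideanSpace.dist_eq, Real.sq_sqrt (by positivity)]
    simp [Fin.sum_univ_two, Real.dist_eq, sq_abs]
  set A := -((a1 0 - a2 0) * V 1) + (a1 1 - a2 1) * V 0 with hAdef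
  set B := (a1 0 - a2 0) * V 0 + (a1 1 - a2 1) * V 1 with hBdef
  set Cc := -((a2 0 - a3 0) * V 1) + (a2 1 - a3 1) * V 0 with hCcdef
  set D := (a2 0 - a3 0) * V 0 + (a2 1 - a3 1) * V 1 with hDdef
  have h12 : (dist a1 a2)^2 = A^2 + B^2 := by
    rw [key, hAdef, hBdef]
    linear_combination (-((a1 0 - a2 0)^2 + (a1 1 - a2 1)^2)) * hV
  have h23 : (dist a2 a3)^2 = Cc^2 + D^2 := by
    rw [key, hCcdef, hDdef]
    linear_combination (-((a2 0 - a3 0)^2 + (a2 1 - a3 1)^2)) * hV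
  have h13 : (dist a1 a3)^2 = (A + Cc)^2 + (B + D)^2 := by
    rw [key, hAdef, hBdef, hCcdef, hDdef]
    linear_combination (-((a1 0 - a3 0)^2 + (a1 1 - a3 1)^2)) * hV
  have habs : ∀ x y : ℝ, |x - y| ≤ |x| + |y| := by
    intro x y
    rw [sub_eq_add_neg]
    exact (abs_add_le _ _).trans (by rw [abs_neg])
  have hB : |B| ≤ 2 * w := by
    have : B = (a1 0 * V 0 + a1 1 * V 1 - t) - (a2 0 * V 0 + a2 1 * V 1 - t) := by
      rw [hBdef]; ring
    rw [this]
    calc |_| ≤ _ := habs _ _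
      _ ≤ 2 * w := by linarith
  have hD : |D| ≤ 2 * w := by
    have : D = (a2 0 * V 0 + a2 1 * V 1 - t) - (a3 0 * V 0 + a3 1 * V 1 - t) := by
      rw [hDdef]; ring
    rw [this]
    calc |_| ≤ _ := habs _ _
      _ ≤ 2 * w := by linarith
  exact aux_strip A B Cc D w L (dist a1 a2) (dist a2 a3) (dist a1 a3) hw hwL
    h12 h23 h13 dist_nonneg dist_nonneg dist_nonneg hL12 hL23 hm12 hm23 hB hD
end
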